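/- Let K be a field of characteristic zero, A = K[x,y,z]/(y² − 2xz − 1), and ∂ the locally nilpotent derivation on A induced by y ∂/∂x + z ∂/∂y. Then Ker(∂) = K[z] (the image of K[z] in A) and pl(∂) = Ker(∂)·z. -/
import Mathlib


open MvPolynomial

set_option synthInstance.maxHeartbeats 1000000
set_option maxHeartbeats 1000000

/-- The derivation `y ∂/∂x + z ∂/∂y` on `K[x,y,z]`, where `x = X 0`, `y = X 1`, `z = X 2`. -/
noncomputable def parabolicDerivation (K : Type*) [CommRing K] :
    Derivation K (MvPolynomial (Fin 3) K) (MvPolynomial (Fin 3) K) :=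
  MvPolynomial.mkDerivation K ![X 1, X 2, 0]

/-- The defining ideal `(y² − 2xz − 1)` of the Danielewski surface. -/
noncomputable def danielewskiIdeal (K : Type*) [Field K] : Ideal (MvPolynomial (Fin 3) K) :=
  Ideal.span {(X 1) ^ 2 - 2 * X 0 * X 2 - 1}

namespace DanAux
variable (K : Type*) [Field K]

/-! ### The coordinate change `K[x,y,z] ≃ K[x,z][y]` -/

noncomputable def e : MvPolynomial (Fin 3) K ≃ₐ[K] Polynomial (MvPolynomial (Fin 2) K) :=
  (renameEquiv K (Equiv.swap (0:Fin 3) 1)).trans (finSuccEquiv K 2)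

lemma e_X0 : e K (X 0) = Polynomial.C (X 0) := by
  show (finSuccEquiv K 2) (rename _ (X 0)) = _
  rw [rename_X, Equiv.swap_apply_left, show (1:Fin 3) = Fin.succ 0 from rfl, finSuccEquiv_X_succ]

lemma e_X1 : e K (X 1) = Polynomial.X := by
  show (finSuccEquiv K 2) (rename _ (X 1)) = _
  rw [rename_X, Equiv.swap_apply_right, finSuccEquiv_X_zero]

lemma e_X2 : e K (X 2) = Polynomial.C (X 1) := by
  show (finSuccEquiv K 2) (rename _ (X 2)) = _
  rw [rename_X, Equiv.swap_apply_of_ne_of_ne (by decide) (by decide),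
    show (2:Fin 3) = Fin.succ 1 from rfl, finSuccEquiv_X_succ]

noncomputable def ι : MvPolynomial (Fin 2) K →ₐ[K] MvPolynomial (Fin 3) K :=
  aeval ![X 0, X 2]

lemma ι_X0 : ι K (X 0) = X 0 := by simp [ι]
lemma ι_X1 : ι K (X 1) = X 2 := by simp [ι]

noncomputable def wP : MvPolynomial (Fin 2) K := 2 * X 0 * X 1 + 1

lemma ι_wP : ι K (wP K) = 2 * X 0 * X 2 + 1 := by
  simp [wP, map_add, map_mul, map_ofNat, ι_X0, ι_X1]

lemma e_ι (p : MvPolynomial (Fin 2) K) : e K (ι K p) = Polynomial.C p := by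
  have h : (e K).toAlgHom.comp (ι K) = Polynomial.CAlgHom := by
    apply algHom_ext
    intro i
    fin_cases i
    · simpa [ι_X0] using e_X0 K
    · simpa [ι_X1] using e_X2 K
  exact congrArg (fun f => f p) (congrArg DFunLike.coe h)

lemma e_f : e K ((X 1) ^ 2 - 2 * X 0 * X 2 - 1 : MvPolynomial (Fin 3) K)
    = Polynomial.X ^ 2 - Polynomial.C (wP K) := by
  rw [map_sub, map_sub, map_pow, map_mul, map_mul, map_one, map_ofNat, e_X0, e_X1, e_X2, wP,
    map_add, map_mul, map_mul, map_one, map_ofNat]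
  ring

/-! ### Unique representation `p + y·q` -/

lemma inj_aux (p q : MvPolynomial (Fin 2) K)
    (h : ι K p + X 1 * ι K q ∈ danielewskiIdeal K) : p = 0 ∧ q = 0 := by
  rw [danielewskiIdeal, Ideal.mem_span_singleton] at h
  obtain ⟨c, hc⟩ := h
  have he : Polynomial.C p + Polynomial.X * Polynomial.C q
      = (Polynomial.X ^ 2 - Polynomial.C (wP K)) * e K c := by
    have := congrArg (e K) hc
    rwa [map_add, map_mul, e_ι, e_ι, e_X1, map_mul, e_f] at this
  have hg : e K c = 0 := by
    by_contra hg
    have hf' : (Polynomial.X ^ 2 - Polynomial.C (wP K) : Polynomial (MvPolynomial (Fin 2) K)) ≠ 0 := by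
      intro h0
      have := congrArg (Polynomial.coeff · 2) h0
      simp [Polynomial.coeff_X_pow] at this
    have hdeg : ((Polynomial.X ^ 2 - Polynomial.C (wP K)) * e K c).natDegree
        = 2 + (e K c).natDegree := by
      rw [Polynomial.natDegree_mul hf' hg, Polynomial.natDegree_X_pow_sub_C]
    have hle : (Polynomial.C p + Polynomial.X * Polynomial.C q).natDegree ≤ 1 := by
      refine le_trans (Polynomial.natDegree_add_le _ _) ?_
      simp only [Polynomial.natDegree_C, max_le_iff]
      refine ⟨Nat.zero_le _, le_trans (Polynomial.natDegree_mul_le) ?_⟩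
      simp
    rw [he, hdeg] at hle
    omega
  rw [hg, mul_zero] at he
  constructor
  · have := congrArg (Polynomial.coeff · 0) he
    simpa using this
  · have := congrArg (Polynomial.coeff · 1) he
    simpa using this

noncomputable def Φ (p q : MvPolynomial (Fin 2) K) :
    MvPolynomial (Fin 3) K ⧸ danielewskiIdeal K :=
  Ideal.Quotient.mk (danielewskiIdeal K) (ι K p + X 1 * ι K q)

lemma Φ_inj {p q p' q' : MvPolynomial (Fin 2) K} (h : Φ K p q = Φ K p' q') :
    p = p' ∧ q = q' := by
  have hmem : ι K (p - p') + X 1 * ι K (q - q') ∈ danielewskiIdeal K := by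
    have h2 := Ideal.Quotient.eq.mp h
    have : ι K (p - p') + X 1 * ι K (q - q')
        = (ι K p + X 1 * ι K q) - (ι K p' + X 1 * ι K q') := by
      rw [map_sub, map_sub]; ring
    rw [this]; exact h2
  obtain ⟨h1, h2⟩ := inj_aux K _ _ hmem
  exact ⟨sub_eq_zero.mp h1, sub_eq_zero.mp h2⟩

lemma Φ_zero : Φ K 0 0 = 0 := by
  simp [Φ]

lemma pd_X0 : parabolicDerivation K (X 0) = X 1 := by
  simp [parabolicDerivation, mkDerivation_X]
lemma pd_X1 : parabolicDerivation K (X 1) = X 2 := by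
  simp [parabolicDerivation, mkDerivation_X]
lemma pd_X2 : parabolicDerivation K (X 2) = 0 := by
  simp [parabolicDerivation, mkDerivation_X]

lemma pd_ι (p : MvPolynomial (Fin 2) K) :
    parabolicDerivation K (ι K p) = X 1 * ι K (pderiv 0 p) := by
  induction p using MvPolynomial.induction_on with
  | C k =>
      rw [pderiv_C, map_zero, mul_zero,
        show (C k : MvPolynomial (Fin 2) K) = algebraMap K _ k from rfl, AlgHom.commutes,
        Derivation.map_algebraMap]
  | add p q hp hq => rw [map_add, map_add, map_add, hp, hq, map_add, mul_add]
  | mul_X p i hp =>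
      fin_cases i
      · show parabolicDerivation K (ι K (p * X 0)) = X 1 * ι K (pderiv 0 (p * X 0))
        rw [map_mul, Derivation.leibniz, ι_X0, pd_X0, hp, smul_eq_mul, smul_eq_mul,
          pderiv_mul, pderiv_X_self, map_add, map_mul, ι_X0, mul_one]
        ring
      · show parabolicDerivation K (ι K (p * X 1)) = X 1 * ι K (pderiv 0 (p * X 1))
        rw [map_mul, Derivation.leibniz, ι_X1, pd_X2, hp, smul_eq_mul, smul_eq_mul,
          pderiv_mul, pderiv_X_of_ne (by decide), map_add, map_mul, ι_X1]
        simp only [mul_zero, map_zero, zero_mul, add_zero]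
        ring

lemma Φ_surj (a : MvPolynomial (Fin 3) K ⧸ danielewskiIdeal K) :
    ∃ p q, Φ K p q = a := by
  obtain ⟨m, rfl⟩ := Ideal.Quotient.mk_surjective a
  induction m using MvPolynomial.induction_on with
  | C k =>
      exact ⟨C k, 0, by simp [Φ, ι, map_zero]⟩
  | add m₁ m₂ h₁ h₂ =>
      obtain ⟨p₁, q₁, e₁⟩ := h₁
      obtain ⟨p₂, q₂, e₂⟩ := h₂
      refine ⟨p₁ + p₂, q₁ + q₂, ?_⟩
      rw [map_add, ← e₁, ← e₂, Φ, Φ, Φ, ← map_add]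
      congr 1
      rw [map_add, map_add]
      ring
  | mul_X m i hm =>
      obtain ⟨p, q, ep⟩ := hm
      fin_cases i
      · show ∃ p' q', Φ K p' q' = Ideal.Quotient.mk (danielewskiIdeal K) (m * X 0)
        refine ⟨X 0 * p, X 0 * q, ?_⟩
        rw [map_mul, ← ep, Φ, Φ, ← map_mul]
        congr 1
        rw [map_mul, map_mul, ι_X0]
        ring
      · show ∃ p' q', Φ K p' q' = Ideal.Quotient.mk (danielewskiIdeal K) (m * X 1)
        refine ⟨wP K * q, p, ?_⟩
        rw [map_mul, ← ep, Φ, Φ, ← map_mul]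
        rw [Ideal.Quotient.eq]
        have : ι K (wP K * q) + X 1 * ι K p - (ι K p + X 1 * ι K q) * X 1
            = -(ι K q) * ((X 1)^2 - 2 * X 0 * X 2 - 1) := by
          rw [map_mul, ι_wP]; ring
        rw [this, danielewskiIdeal]
        exact Ideal.mul_mem_left _ _ (Ideal.subset_span rfl)
      · show ∃ p' q', Φ K p' q' = Ideal.Quotient.mk (danielewskiIdeal K) (m * X 2)
        refine ⟨X 1 * p, X 1 * q, ?_⟩
        rw [map_mul, ← ep, Φ, Φ, ← map_mul]
        congr 1
        rw [map_mul, map_mul, ι_X1]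
        ring

lemma D_Φ
    (D : Derivation K (MvPolynomial (Fin 3) K ⧸ danielewskiIdeal K)
          (MvPolynomial (Fin 3) K ⧸ danielewskiIdeal K))
    (hind : ∀ p : MvPolynomial (Fin 3) K,
      D (Ideal.Quotient.mk (danielewskiIdeal K) p) =
        Ideal.Quotient.mk (danielewskiIdeal K) (parabolicDerivation K p))
    (p q : MvPolynomial (Fin 2) K) :
    D (Φ K p q) = Φ K (X 1 * q + wP K * pderiv 0 q) (pderiv 0 p) := by
  rw [Φ, hind, map_add, Derivation.leibniz, pd_X1, pd_ι, pd_ι, smul_eq_mul, smul_eq_mul]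
  rw [Φ, Ideal.Quotient.eq]
  have hkey : X 1 * ι K (pderiv 0 p) + (X 1 * (X 1 * ι K (pderiv 0 q)) + ι K q * X 2)
      - (ι K (X 1 * q + wP K * pderiv 0 q) + X 1 * ι K (pderiv 0 p))
      = ι K (pderiv 0 q) * ((X 1)^2 - 2 * X 0 * X 2 - 1) := by
    rw [map_add, map_mul, map_mul, ι_X1, ι_wP]; ring
  rw [hkey, danielewskiIdeal]
  exact Ideal.mul_mem_left _ _ (Ideal.subset_span rfl)

/-! ### The kernel of `∂/∂x`-type equations in `K[x,z]` -/

noncomputable def ψ : MvPolynomial (Fin 2) K ≃ₐ[K] Polynomial (MvPolynomial (Fin 1) K) :=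
  finSuccEquiv K 1

lemma ψ_X0 : ψ K (X 0) = Polynomial.X := finSuccEquiv_X_zero
lemma ψ_X1 : ψ K (X 1) = Polynomial.C (X 0) := by
  rw [ψ, show (1 : Fin 2) = Fin.succ 0 from rfl, finSuccEquiv_X_succ]

lemma ψ_pderiv (p : MvPolynomial (Fin 2) K) :
    ψ K (pderiv 0 p) = Polynomial.derivative (ψ K p) := by
  induction p using MvPolynomial.induction_on with
  | C k =>
      rw [pderiv_C, map_zero, show (C k : MvPolynomial (Fin 2) K) = algebraMap K _ k from rfl,
        AlgEquiv.commutes, Polynomial.algebraMap_apply, Polynomial.derivative_C]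
  | add p q hp hq => rw [map_add, map_add, hp, hq, map_add, map_add]
  | mul_X p i hp =>
      fin_cases i
      · show ψ K (pderiv 0 (p * X 0)) = Polynomial.derivative (ψ K (p * X 0))
        rw [pderiv_mul, pderiv_X_self, mul_one, map_add, map_mul, hp, ψ_X0, map_mul, ψ_X0,
          Polynomial.derivative_mul, Polynomial.derivative_X, mul_one]
      · show ψ K (pderiv 0 (p * X 1)) = Polynomial.derivative (ψ K (p * X 1))
        rw [pderiv_mul, pderiv_X_of_ne (by decide), mul_zero, add_zero, map_mul, hp, ψ_X1,
          map_mul, ψ_X1, Polynomial.derivative_mul, Polynomial.derivative_C, mul_zero, add_zero]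

lemma keycoeff {S : Type*} [CommRing S] [IsDomain S] [CharZero S] (t : S) (ht : t ≠ 0)
    (m : ℕ) (hm : 0 < m) (Q : Polynomial S)
    (h : Polynomial.C ((m : S) * t) * Q
      + (2 * Polynomial.X * Polynomial.C t + 1) * Polynomial.derivative Q = 0) : Q = 0 := by
  by_contra hQ
  have hL : Q.coeff Q.natDegree ≠ 0 := Polynomial.leadingCoeff_ne_zero.mpr hQ
  have h2 : Polynomial.C ((m : S) * t) * Q
      + Polynomial.C (2 * t) * (Polynomial.X * Polynomial.derivative Q)
      + Polynomial.derivative Q = 0 := by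
    rw [show (Polynomial.C (2 * t) : Polynomial S) = 2 * Polynomial.C t by
      rw [map_mul, map_ofNat]]
    linear_combination h
  rcases hn : Q.natDegree with _ | k
  · have hQC : Q = Polynomial.C (Q.coeff 0) := Polynomial.eq_C_of_natDegree_eq_zero hn
    have hd : Polynomial.derivative Q = 0 := by rw [hQC, Polynomial.derivative_C]
    rw [hd] at h2
    simp only [mul_zero, add_zero] at h2
    rw [hQC, ← map_mul] at h2
    have h3 := Polynomial.C_eq_zero.mp h2
    rcases mul_eq_zero.mp h3 with h' | h'
    · rcases mul_eq_zero.mp h' with h'' | h''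
      · exact (Nat.cast_ne_zero.mpr hm.ne') h''
      · exact ht h''
    · rw [hn] at hL; exact hL h'
  · have hc := congrArg (Polynomial.coeff · (k + 1)) h2
    simp only [Polynomial.coeff_add, Polynomial.coeff_zero, Polynomial.coeff_C_mul,
      Polynomial.coeff_X_mul, Polynomial.coeff_derivative] at hc
    have hz : Q.coeff (k + 2) = 0 := by
      apply Polynomial.coeff_eq_zero_of_natDegree_lt
      omega
    rw [hz, zero_mul] at hc
    have hfin : t * Q.coeff (k + 1) * ((m : S) + 2 * ((k : S) + 1)) = 0 := by
      push_cast at hc ⊢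
      linear_combination hc
    rw [hn] at hL
    have hne : ((m : S) + 2 * ((k : S) + 1)) ≠ 0 := by
      have : ((m + 2 * (k + 1) : ℕ) : S) ≠ 0 := Nat.cast_ne_zero.mpr (by omega)
      push_cast at this
      intro h0
      exact this (by linear_combination h0)
    exact (mul_ne_zero (mul_ne_zero ht hL) hne) hfin

lemma qzero [CharZero K] (m : ℕ) (hm : 0 < m) (q : MvPolynomial (Fin 2) K)
    (h : (m : MvPolynomial (Fin 2) K) * X 1 * q + wP K * pderiv 0 q = 0) : q = 0 := by
  have hψ := congrArg (ψ K) h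
  rw [map_add, map_mul, map_mul, map_natCast, ψ_X1, map_mul, ψ_pderiv, wP,
    map_add, map_mul, map_mul, map_ofNat, map_one, ψ_X0, ψ_X1] at hψ
  rw [map_zero] at hψ
  have h' : Polynomial.C (((m : ℕ) : MvPolynomial (Fin 1) K) * X 0) * (ψ K q)
      + (2 * Polynomial.X * Polynomial.C (X 0) + 1) * Polynomial.derivative (ψ K q) = 0 := by
    rw [map_mul, map_natCast]
    linear_combination hψ
  have := keycoeff (X 0 : MvPolynomial (Fin 1) K) (X_ne_zero 0) m hm (ψ K q) h'
  have h0 : ψ K q = ψ K 0 := by rw [this, map_zero]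
  exact (ψ K).injective h0

lemma kerpd [CharZero K] (p : MvPolynomial (Fin 2) K) (h : pderiv 0 p = 0) :
    p ∈ Algebra.adjoin K {(X 1 : MvPolynomial (Fin 2) K)} := by
  have hd : Polynomial.derivative (ψ K p) = 0 := by rw [← ψ_pderiv, h, map_zero]
  have hC : ψ K p = Polynomial.C ((ψ K p).coeff 0) := Polynomial.eq_C_of_derivative_eq_zero hd
  set c := (ψ K p).coeff 0 with hc
  let g : MvPolynomial (Fin 1) K →ₐ[K] MvPolynomial (Fin 2) K := aeval ![X 1]
  have hg : p = g c := by
    apply (ψ K).injective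
    rw [hC]
    have hcomp : (ψ K).toAlgHom.comp g = Polynomial.CAlgHom := by
      apply algHom_ext
      intro i
      fin_cases i
      show ψ K (g (X 0)) = Polynomial.CAlgHom (X 0)
      simp only [g, aeval_X, Matrix.cons_val_zero]
      rw [ψ_X1]; rfl
    exact (congrArg (fun f => f c) (congrArg DFunLike.coe hcomp)).symm
  rw [hg]
  have hmem : c ∈ (⊤ : Subalgebra K (MvPolynomial (Fin 1) K)) := trivial
  rw [← adjoin_range_X] at hmem
  have : Set.range (X : Fin 1 → MvPolynomial (Fin 1) K) = {X 0} := by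
    ext v; constructor
    · rintro ⟨i, rfl⟩; rw [Subsingleton.elim i 0]; rfl
    · rintro rfl; exact ⟨0, rfl⟩
  rw [this] at hmem
  have himg : g c ∈ (Algebra.adjoin K {(X 0 : MvPolynomial (Fin 1) K)}).map g :=
    ⟨c, hmem, rfl⟩
  rw [AlgHom.map_adjoin, Set.image_singleton] at himg
  have hgx : g (X 0) = X 1 := by simp [g]
  rwa [hgx] at himg

lemma pd_wP : pderiv 0 (wP K) = 2 * X 1 := by
  have : wP K = C 2 * X 0 * X 1 + 1 := by rw [wP, map_ofNat]
  rw [this]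
  simp only [pderiv_mul, pderiv_X_self, pderiv_X_of_ne (show (1:Fin 2) ≠ 0 by decide), pderiv_C, Derivation.map_one_eq_zero,
    map_add, map_mul, add_zero]
  rw [map_ofNat]
  ring

lemma mk_ι_adjoin [CharZero K] (p : MvPolynomial (Fin 2) K) (hp : pderiv 0 p = 0) :
    Ideal.Quotient.mk (danielewskiIdeal K) (ι K p) ∈ Algebra.adjoin K
      ({Ideal.Quotient.mk (danielewskiIdeal K) (X 2)} :
        Set (MvPolynomial (Fin 3) K ⧸ danielewskiIdeal K)) := by
  have hm := kerpd K p hp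
  let g : MvPolynomial (Fin 2) K →ₐ[K] (MvPolynomial (Fin 3) K ⧸ danielewskiIdeal K) :=
    (Ideal.Quotient.mkₐ K (danielewskiIdeal K)).comp (ι K)
  have himg : g p ∈ (Algebra.adjoin K {(X 1 : MvPolynomial (Fin 2) K)}).map g :=
    ⟨p, hm, rfl⟩
  rw [AlgHom.map_adjoin, Set.image_singleton] at himg
  have hgx : g (X 1) = Ideal.Quotient.mk (danielewskiIdeal K) (X 2) := by
    simp only [g, AlgHom.coe_comp, Function.comp_apply, ι_X1]
    rfl
  rw [hgx] at himg
  exact himg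

end DanAux

/-- For `A = K[x,y,z]/(y² − 2xz − 1)` and `∂` the locally nilpotent derivation
induced by `y ∂/∂x + z ∂/∂y`, one has `Ker ∂ = K[z]` (image of `K[z]` in `A`) and
`pl(∂) = Ker(∂)·z`. -/
theorem danielewski_kernel_and_plinth (K : Type*) [Field K] [CharZero K]
    (D : Derivation K (MvPolynomial (Fin 3) K ⧸ danielewskiIdeal K)
          (MvPolynomial (Fin 3) K ⧸ danielewskiIdeal K))
    (hind : ∀ p : MvPolynomial (Fin 3) K,
      D (Ideal.Quotient.mk (danielewskiIdeal K) p) =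
        Ideal.Quotient.mk (danielewskiIdeal K) (parabolicDerivation K p))
    (hLN : ∀ q : MvPolynomial (Fin 3) K ⧸ danielewskiIdeal K, ∃ n : ℕ, (⇑D)^[n] q = 0) :
    (∀ q : MvPolynomial (Fin 3) K ⧸ danielewskiIdeal K,
      D q = 0 ↔ q ∈ Algebra.adjoin K
        ({Ideal.Quotient.mk (danielewskiIdeal K) (X 2)} :
          Set (MvPolynomial (Fin 3) K ⧸ danielewskiIdeal K))) ∧
    (∀ q : MvPolynomial (Fin 3) K ⧸ danielewskiIdeal K,
      (D q = 0 ∧ q ∈ Set.range ⇑D) ↔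
      ∃ k : MvPolynomial (Fin 3) K ⧸ danielewskiIdeal K,
        D k = 0 ∧ q = k * Ideal.Quotient.mk (danielewskiIdeal K) (X 2)) := by
  classical
  set mkq := Ideal.Quotient.mk (danielewskiIdeal K) with hmkq
  -- D kills z̄
  have hDz : D (mkq (X 2)) = 0 := by
    rw [hmkq, hind, DanAux.pd_X2, map_zero]
  -- D kills y-bar's image: D ȳ = z̄
  have hDy : D (mkq (X 1)) = mkq (X 2) := by
    rw [hmkq, hind, DanAux.pd_X1]
  -- D kills everything in adjoin {z̄}
  have hker : ∀ x ∈ Algebra.adjoin K ({mkq (X 2)} :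
      Set (MvPolynomial (Fin 3) K ⧸ danielewskiIdeal K)), D x = 0 := by
    intro x hx
    induction hx using Algebra.adjoin_induction with
    | mem a ha =>
        rw [Set.mem_singleton_iff] at ha
        rw [ha]; exact hDz
    | algebraMap r => exact D.map_algebraMap r
    | add a b _ _ ha hb => rw [map_add, ha, hb, add_zero]
    | mul a b _ _ ha hb => rw [Derivation.leibniz, ha, hb, smul_zero, smul_zero, add_zero]
  -- the kernel statement
  have part1 : ∀ q : MvPolynomial (Fin 3) K ⧸ danielewskiIdeal K,
      D q = 0 ↔ q ∈ Algebra.adjoin K ({mkq (X 2)} :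
        Set (MvPolynomial (Fin 3) K ⧸ danielewskiIdeal K)) := by
    intro a
    constructor
    · intro ha
      obtain ⟨p, q, rfl⟩ := DanAux.Φ_surj K a
      rw [DanAux.D_Φ K D hind, ← DanAux.Φ_zero K] at ha
      obtain ⟨h1, h2⟩ := DanAux.Φ_inj K ha
      have hq0 : q = 0 := by
        apply DanAux.qzero K 1 one_pos
        rw [Nat.cast_one, one_mul]
        exact h1
      rw [DanAux.Φ, hq0, map_zero, mul_zero, add_zero]
      exact DanAux.mk_ι_adjoin K p h2
    · exact hker _
  refine ⟨part1, ?_⟩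
  intro a
  constructor
  · rintro ⟨ha0, b, hb⟩
    obtain ⟨p, q, rfl⟩ := DanAux.Φ_surj K b
    rw [DanAux.D_Φ K D hind] at hb
    subst hb
    rw [DanAux.D_Φ K D hind, ← DanAux.Φ_zero K] at ha0
    obtain ⟨h1, h2⟩ := DanAux.Φ_inj K ha0
    -- h2 : pderiv 0 (X 1 * q + wP * pderiv 0 q) = 0
    have hdq : pderiv 0 q = 0 := by
      apply DanAux.qzero K 3 (by norm_num)
      have hexp : pderiv 0 (X 1 * q + DanAux.wP K * pderiv 0 q)
          = X 1 * pderiv 0 q + (2 * X 1 * pderiv 0 q + DanAux.wP K * pderiv 0 (pderiv 0 q)) := by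
        rw [map_add, pderiv_mul, pderiv_X_of_ne (by decide), pderiv_mul, DanAux.pd_wP]
        ring
      rw [hexp] at h2
      have : ((3 : ℕ) : MvPolynomial (Fin 2) K) * X 1 * pderiv 0 q
          + DanAux.wP K * pderiv 0 (pderiv 0 q) = 0 := by
        push_cast
        linear_combination h2
      exact this
    have hp0 : pderiv 0 p = 0 := by
      apply DanAux.qzero K 1 one_pos
      rw [Nat.cast_one, one_mul]
      exact h1
    refine ⟨DanAux.Φ K q 0, ?_, ?_⟩
    · rw [DanAux.D_Φ K D hind, hdq]
      simp only [map_zero, mul_zero, add_zero, zero_add]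
      exact DanAux.Φ_zero K
    · rw [hp0, hdq, mul_zero, add_zero]
      rw [DanAux.Φ, DanAux.Φ, map_zero, mul_zero, add_zero, add_zero, ← map_mul]
      congr 1
      rw [map_mul, DanAux.ι_X1]
      ring
  · rintro ⟨k, hk, rfl⟩
    constructor
    · rw [Derivation.leibniz, hk, hDz, smul_zero, smul_zero, add_zero]
    · refine ⟨k * mkq (X 1), ?_⟩
      rw [Derivation.leibniz, hk, hDy, smul_zero, add_zero, smul_eq_mul]
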